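/- arXiv:1812.08418 — 3 statements merged into one kernel-verified Lean document; each statement's English description precedes it below -/
import Mathlib

section
/- Let N ≥ 3, p > 1 with 1 < p < N/(N-2), K = ((N-2)p - N)/(p-1) < 0, and μ* = (p+1)·((N-(N-2)p)/(2p))^(p/(p+1)). If -μ* < M < 0, then the function f_M(y) = ((p-1)/2)^p y^(p-1) + M y^((p-1)/(p+1)) - K has no positive root. -/
/-!
With `t = y ^ ((p - 1) / (p + 1))` we have `y ^ (p - 1) = t ^ (p + 1)`, so `f_M(y) = a t ^ (p + 1) + M t - K`
with `a = ((p - 1) / 2) ^ p`. Weighted AM-GM (the tangent-line bound for `t ↦ t ^ (p + 1)`) gives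
`μ* t ≤ a t ^ (p + 1) - K` for all `t ≥ 0`, with equality at one point; this is where `μ*` comes from.
Hence `f_M(y) ≥ (μ* + M) t > 0`.
-/

open Real

theorem mul_rpow_le_rpow_add {r c u : ℝ} (hr : 1 ≤ r) (hc : 0 ≤ c) (hu : 0 ≤ u) :
    r * c ^ ((r - 1) / r) * u ≤ u ^ r + (r - 1) * c := by
  have hr0 : 0 < r := by linarith
  have amgm := geom_mean_le_arith_mean2_weighted (inv_nonneg.2 hr0.le)
    (div_nonneg (sub_nonneg.2 hr) hr0.le) (rpow_nonneg hu r) hc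
    (by field_simp; ring : r⁻¹ + (r - 1) / r = 1)
  rw [rpow_rpow_inv hu hr0.ne'] at amgm
  have := mul_le_mul_of_nonneg_left amgm hr0.le
  field_simp at this
  linarith

-- The substitution `u = (p - 1) t / 2` reduces this to `mul_rpow_le_rpow_add` with `r = p + 1`.
theorem threshold_mul_le {p c t : ℝ} (hp : 1 < p) (hc : 0 ≤ c) (ht : 0 ≤ t) :
    (p + 1) * c ^ (p / (p + 1)) * t ≤ ((p - 1) / 2) ^ p * t ^ (p + 1) + 2 * p * c / (p - 1) := by
  have hp1 : 0 < (p - 1) / 2 := by linarith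
  have key := mul_rpow_le_rpow_add (r := p + 1) (by linarith) hc (mul_nonneg hp1.le ht)
  rw [add_sub_cancel_right, mul_rpow hp1.le ht, rpow_add_one hp1.ne'] at key
  have rhs : ((p - 1) / 2) ^ p * t ^ (p + 1) + 2 * p * c / (p - 1)
      = (((p - 1) / 2) ^ p * ((p - 1) / 2) * t ^ (p + 1) + p * c) / ((p - 1) / 2) := by
    have : p - 1 ≠ 0 := by linarith
    field_simp
  rw [rhs, le_div_iff₀ hp1]
  linarith

theorem sub_mul_nonneg_of_lt_div {N p : ℝ} (hN : 0 ≤ N) (hp : 0 ≤ p) (hpN : p < N / (N - 2)) :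
    0 ≤ N - (N - 2) * p := by
  rcases le_or_gt (N - 2) 0 with h | h
  · nlinarith
  · nlinarith [(lt_div_iff₀ h).1 hpN]

theorem stmt_1_general (N : ℕ) (p : ℝ) (hp : 1 < p)
    (hpN : p < (N : ℝ) / (N - 2)) (K : ℝ) (hK : K = (((N : ℝ) - 2) * p - N) / (p - 1))
    (μs : ℝ) (hμ : μs = (p + 1) * (((N : ℝ) - (N - 2) * p) / (2 * p)) ^ (p / (p + 1)))
    (M : ℝ) (hM1 : -μs < M) :
    ∀ y : ℝ, 0 < y →
      ((p - 1) / 2) ^ p * y ^ (p - 1) + M * y ^ ((p - 1) / (p + 1)) - K ≠ 0 := by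
  intro y hy
  set c := ((N : ℝ) - (N - 2) * p) / (2 * p) with hc_def
  have hc : 0 ≤ c := div_nonneg
    (sub_mul_nonneg_of_lt_div (Nat.cast_nonneg N) (by linarith) hpN) (by linarith)
  have hK' : K = -(2 * p * c / (p - 1)) := by
    rw [hK, hc_def]; field_simp; ring
  set t := y ^ ((p - 1) / (p + 1))
  have ht : 0 < t := rpow_pos_of_pos hy _
  have hyt : y ^ (p - 1) = t ^ (p + 1) := by
    rw [← rpow_mul hy.le]; congr 1; field_simp
  have bound := threshold_mul_le hp hc ht.le
  rw [← hμ] at bound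
  rw [hyt, hK']
  nlinarith [mul_pos (neg_lt_iff_pos_add.1 hM1) ht]

theorem stmt_1 (N : ℕ) (hN : 3 ≤ N) (p : ℝ) (hp : 1 < p)
    (hpN : p < (N : ℝ) / (N - 2)) (K : ℝ) (hK : K = (((N : ℝ) - 2) * p - N) / (p - 1))
    (μs : ℝ) (hμ : μs = (p + 1) * (((N : ℝ) - (N - 2) * p) / (2 * p)) ^ (p / (p + 1)))
    (M : ℝ) (hM1 : -μs < M) (hM2 : M < 0) :
    ∀ y : ℝ, 0 < y →
      ((p - 1) / 2) ^ p * y ^ (p - 1) + M * y ^ ((p - 1) / (p + 1)) - K ≠ 0 :=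
  stmt_1_general N p hp hpN K hK μs hμ M hM1
end

section
/- Let N ≥ 1, p > 1, K = ((N-2)p - N)/(p-1), L = K - 2/(p-1), and M ∈ ℝ. Define J(x,y) = K x²/(p-1) - |x|^(p+1)/(p+1) - M (2/(p-1))^(2p/(p+1)) (p+1)|x|^((3p+1)/(p+1))/(3p+1) - (1/2)(2x/(p-1) - y)². If (x(t), y(t)) solves x_t = 2x/(p-1) - y, y_t = -Ky + |x|^(p-1)x + M|y|^(2p/(p+1)) and stays in the open first quadrant, then the derivative of V(t) = J(x(t), y(t)) equals L(2x/(p-1) - y)² - M((2x/(p-1))^(2p/(p+1)) - y^(2p/(p+1)))(2x/(p-1) - y). -/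
/-! Both power terms of `J` are potentials `|a| ^ (q + 1) / (q + 1)` (with `q = p` and
`q = 2p/(p+1)`), so by the chain rule every term of `dV/dt` carries the factor
`x_t = 2x/(p-1) - y`. Substituting `y_t`, the terms `x ^ p` cancel, `K (2x/(p-1)) x_t - K y x_t`
combines with `-(2/(p-1)) x_t²` into `L x_t²`, and the gradient terms leave
`-M ((2x/(p-1)) ^ (2p/(p+1)) - y ^ (2p/(p+1))) x_t`. -/

lemma hasDerivAt_abs_rpow_add_one_div {q a : ℝ} (hq : q + 1 ≠ 0) (ha : 0 < a) :
    HasDerivAt (fun b => |b| ^ (q + 1) / (q + 1)) (a ^ q) a := by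
  have h := (Real.hasDerivAt_rpow_const (p := q + 1) (Or.inl ha.ne')).div_const (q + 1)
  rw [add_sub_cancel_right, mul_div_cancel_left₀ _ hq] at h
  refine h.congr_of_eventuallyEq ?_
  filter_upwards [eventually_gt_nhds ha] with b hb
  rw [abs_of_pos hb]

theorem stmt_11_general (p : ℝ) (hp : 1 < p) (M : ℝ)
    (K L : ℝ) (hL : L = K - 2 / (p - 1))
    (J : ℝ → ℝ → ℝ)
    (hJ : ∀ a b : ℝ, J a b = K * a ^ 2 / (p - 1) - |a| ^ (p + 1) / (p + 1)
        - M * (2 / (p - 1)) ^ (2 * p / (p + 1)) * ((p + 1) * |a| ^ ((3 * p + 1) / (p + 1)) / (3 * p + 1))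
        - (1 / 2) * (2 * a / (p - 1) - b) ^ 2)
    (x y : ℝ → ℝ) (t : ℝ)
    (hx : HasDerivAt x (2 * x t / (p - 1) - y t) t)
    (hy : HasDerivAt y (-K * y t + |x t| ^ (p - 1) * x t + M * |y t| ^ (2 * p / (p + 1))) t)
    (hxpos : 0 < x t) (hypos : 0 < y t) :
    HasDerivAt (fun s => J (x s) (y s))
      (L * (2 * x t / (p - 1) - y t) ^ 2
        - M * ((2 * x t / (p - 1)) ^ (2 * p / (p + 1)) - (y t) ^ (2 * p / (p + 1)))
          * (2 * x t / (p - 1) - y t)) t := by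
  have hr : 2 * p / (p + 1) + 1 = (3 * p + 1) / (p + 1) := by
    field_simp
    ring
  have hpot_p := (hasDerivAt_abs_rpow_add_one_div (q := p) (by linarith) hxpos).comp t hx
  have hpot_r := (hasDerivAt_abs_rpow_add_one_div (q := 2 * p / (p + 1)) (by rw [hr]; positivity)
    hxpos).comp t hx
  have hgap := ((hx.const_mul 2).div_const (p - 1)).sub hy
  have hJxy : (fun s => J (x s) (y s)) = fun s => K * x s ^ 2 / (p - 1) - |x s| ^ (p + 1) / (p + 1)
      - M * (2 / (p - 1)) ^ (2 * p / (p + 1)) * (|x s| ^ (2 * p / (p + 1) + 1) / (2 * p / (p + 1) + 1))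
      - 1 / 2 * (2 * x s / (p - 1) - y s) ^ 2 := by
    funext s
    rw [hJ, hr, div_div_eq_mul_div, mul_comm (p + 1)]
  rw [hJxy]
  refine (((((hx.pow 2).const_mul K).div_const (p - 1)).sub hpot_p).sub
    (hpot_r.const_mul (M * (2 / (p - 1)) ^ (2 * p / (p + 1)))) |>.sub
      ((hgap.pow 2).const_mul (1 / 2))).congr_deriv ?_
  have hxp : |x t| ^ (p - 1) * x t = x t ^ p := by
    rw [abs_of_pos hxpos, Real.rpow_sub_one hxpos.ne', div_mul_cancel₀ _ hxpos.ne']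
  have hxr : (2 * x t / (p - 1)) ^ (2 * p / (p + 1))
      = (2 / (p - 1)) ^ (2 * p / (p + 1)) * x t ^ (2 * p / (p + 1)) := by
    rw [mul_div_right_comm, Real.mul_rpow (by positivity) hxpos.le]
  rw [Pi.sub_apply, hxp, hxr, abs_of_pos hypos, hL]
  ring

theorem stmt_11 (N : ℕ) (hN : 1 ≤ N) (p : ℝ) (hp : 1 < p) (M : ℝ)
    (K L : ℝ) (hK : K = (((N : ℝ) - 2) * p - N) / (p - 1)) (hL : L = K - 2 / (p - 1))
    (J : ℝ → ℝ → ℝ)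
    (hJ : ∀ a b : ℝ, J a b = K * a ^ 2 / (p - 1) - |a| ^ (p + 1) / (p + 1)
        - M * (2 / (p - 1)) ^ (2 * p / (p + 1)) * ((p + 1) * |a| ^ ((3 * p + 1) / (p + 1)) / (3 * p + 1))
        - (1 / 2) * (2 * a / (p - 1) - b) ^ 2)
    (x y : ℝ → ℝ) (t : ℝ)
    (hx : HasDerivAt x (2 * x t / (p - 1) - y t) t)
    (hy : HasDerivAt y (-K * y t + |x t| ^ (p - 1) * x t + M * |y t| ^ (2 * p / (p + 1))) t)
    (hxpos : 0 < x t) (hypos : 0 < y t) :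
    HasDerivAt (fun s => J (x s) (y s))
      (L * (2 * x t / (p - 1) - y t) ^ 2
        - M * ((2 * x t / (p - 1)) ^ (2 * p / (p + 1)) - (y t) ^ (2 * p / (p + 1)))
          * (2 * x t / (p - 1) - y t)) t :=
  stmt_11_general p hp M K L hL J hJ x y t hx hy hxpos hypos
end

section
/- Let N ≥ 1, p > 1, M < 0, and suppose the sum (2x/(p-1))^(2p/(p+1)) - y^(2p/(p+1)) has the same sign as 2x/(p-1) - y for x, y > 0 (which holds since t ↦ t^(2p/(p+1)) is strictly increasing). If moreover p ≥ (N+2)/(N-2) (so L ≥ 0), then along any solution of the system staying in the first quadrant, the function V(t) = J(x(t),y(t)) of the previous lemma is nondecreasing. -/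
/-!
Write `w = 2x/(p-1) - y` and `u = 2x/(p-1)`. Along a solution in the first quadrant the chain rule
gives `V' = L w² - M (u^q - y^q) w` with `q = 2p/(p+1)`, because the constant
`(2/(p-1))^q` in `J` is exactly what turns `x^q` into `u^q`. Both terms are nonnegative when
`L ≥ 0` and `M < 0`, since `t ↦ t^q` is increasing, so `V` is monotone.
-/

open Real

lemma rpow_sub_rpow_mul_sub_nonneg {a b q : ℝ} (ha : 0 ≤ a) (hb : 0 ≤ b) (hq : 0 ≤ q) :
    0 ≤ (a ^ q - b ^ q) * (a - b) := by
  rcases le_total b a with hba | hab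
  · exact mul_nonneg (sub_nonneg.2 (rpow_le_rpow hb hba hq)) (sub_nonneg.2 hba)
  · exact mul_nonneg_of_nonpos_of_nonpos (sub_nonpos.2 (rpow_le_rpow ha hab hq))
      (sub_nonpos.2 hab)

noncomputable def potential (p K C a : ℝ) : ℝ :=
  K * a ^ 2 / (p - 1) - a ^ (p + 1) / (p + 1) - C * ((p + 1) * a ^ ((3 * p + 1) / (p + 1)) / (3 * p + 1))

section
variable {p K : ℝ}

lemma hasDerivAt_potential (hp : 0 < p) (C : ℝ) {a : ℝ} (ha : 0 < a) :
    HasDerivAt (potential p K C) (2 * K * a / (p - 1) - a ^ p - C * a ^ (2 * p / (p + 1))) a := by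
  have hp1 : p + 1 ≠ 0 := by linarith
  have h3p1 : 3 * p + 1 ≠ 0 := by linarith
  have h := ((((hasDerivAt_id a).pow 2).const_mul K).div_const (p - 1)).sub
    (((hasDerivAt_id a).rpow_const (p := p + 1) (Or.inl ha.ne')).div_const (p + 1)) |>.sub
    ((((hasDerivAt_id a).rpow_const (p := (3 * p + 1) / (p + 1)) (Or.inl ha.ne')).const_mul
      (p + 1)).div_const (3 * p + 1) |>.const_mul C)
  refine h.congr_deriv ?_
  have hexp : (3 * p + 1) / (p + 1) - 1 = 2 * p / (p + 1) := by field_simp; ring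
  simp only [id, add_sub_cancel_right, hexp]
  field_simp
  ring

variable {M : ℝ}

lemma hasDerivAt_lyapunov (hp : 1 < p) {x y : ℝ → ℝ} {t : ℝ}
    (hx : HasDerivAt x (2 * x t / (p - 1) - y t) t)
    (hy : HasDerivAt y (-K * y t + x t ^ p + M * y t ^ (2 * p / (p + 1))) t) (hx0 : 0 < x t) :
    HasDerivAt
      (fun s => potential p K (M * (2 / (p - 1)) ^ (2 * p / (p + 1))) (x s)
        - 1 / 2 * (2 * x s / (p - 1) - y s) ^ 2)
      ((K - 2 / (p - 1)) * (2 * x t / (p - 1) - y t) ^ 2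
        - M * (((2 * x t / (p - 1)) ^ (2 * p / (p + 1)) - y t ^ (2 * p / (p + 1)))
          * (2 * x t / (p - 1) - y t))) t := by
  have hw := (((hx.const_mul 2).div_const (p - 1)).sub hy).pow 2 |>.const_mul (1 / 2)
  refine ((hasDerivAt_potential (by linarith) _ hx0).comp t hx |>.sub hw).congr_deriv ?_
  have hu : (2 * x t / (p - 1)) ^ (2 * p / (p + 1))
      = (2 / (p - 1)) ^ (2 * p / (p + 1)) * x t ^ (2 * p / (p + 1)) := by
    rw [mul_div_right_comm, mul_rpow (div_nonneg zero_le_two (by linarith)) hx0.le]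
  simp only [Pi.sub_apply, hu]
  push_cast
  ring

end

theorem stmt_12_general (p : ℝ) (hp : 1 < p) (M : ℝ) (hM : M < 0)
    (K L : ℝ) (hL : L = K - 2 / (p - 1))
    (hL0 : 0 ≤ L)
    (J : ℝ → ℝ → ℝ)
    (hJ : ∀ a b : ℝ, J a b = K * a ^ 2 / (p - 1) - |a| ^ (p + 1) / (p + 1)
        - M * (2 / (p - 1)) ^ (2 * p / (p + 1)) * ((p + 1) * |a| ^ ((3 * p + 1) / (p + 1)) / (3 * p + 1))
        - (1 / 2) * (2 * a / (p - 1) - b) ^ 2)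
    (x y : ℝ → ℝ)
    (hx : ∀ t, HasDerivAt x (2 * x t / (p - 1) - y t) t)
    (hy : ∀ t, HasDerivAt y (-K * y t + |x t| ^ (p - 1) * x t + M * |y t| ^ (2 * p / (p + 1))) t)
    (hQ : ∀ t, 0 < x t ∧ 0 < y t) :
    Monotone (fun t => J (x t) (y t)) := by
  have hV : (fun t => J (x t) (y t)) = fun t =>
      potential p K (M * (2 / (p - 1)) ^ (2 * p / (p + 1))) (x t)
        - 1 / 2 * (2 * x t / (p - 1) - y t) ^ 2 := by
    funext t
    simp only [hJ, potential, abs_of_pos (hQ t).1, mul_assoc]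
  have hV' : ∀ t, HasDerivAt (fun t => J (x t) (y t)) _ t := fun t => by
    obtain ⟨hx0, hy0⟩ := hQ t
    have hy' := (hy t).congr_deriv (by
      rw [abs_of_pos hx0, abs_of_pos hy0, ← rpow_add_one hx0.ne', sub_add_cancel])
    exact hV ▸ hasDerivAt_lyapunov hp (hx t) hy' hx0
  refine monotone_of_deriv_nonneg (fun t => (hV' t).differentiableAt) fun t => ?_
  obtain ⟨hx0, hy0⟩ := hQ t
  rw [(hV' t).deriv, ← hL]
  exact sub_nonneg_of_le <| (mul_nonpos_of_nonpos_of_nonneg hM.le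
    (rpow_sub_rpow_mul_sub_nonneg (by positivity) hy0.le (by positivity))).trans
    (mul_nonneg hL0 (sq_nonneg _))

theorem stmt_12 (N : ℕ) (hN : 1 ≤ N) (p : ℝ) (hp : 1 < p) (M : ℝ) (hM : M < 0)
    (hpc : ((N : ℝ) + 2) / ((N : ℝ) - 2) ≤ p)
    (K L : ℝ) (hK : K = (((N : ℝ) - 2) * p - N) / (p - 1)) (hL : L = K - 2 / (p - 1))
    (hL0 : 0 ≤ L)
    (J : ℝ → ℝ → ℝ)
    (hJ : ∀ a b : ℝ, J a b = K * a ^ 2 / (p - 1) - |a| ^ (p + 1) / (p + 1)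
        - M * (2 / (p - 1)) ^ (2 * p / (p + 1)) * ((p + 1) * |a| ^ ((3 * p + 1) / (p + 1)) / (3 * p + 1))
        - (1 / 2) * (2 * a / (p - 1) - b) ^ 2)
    (x y : ℝ → ℝ)
    (hx : ∀ t, HasDerivAt x (2 * x t / (p - 1) - y t) t)
    (hy : ∀ t, HasDerivAt y (-K * y t + |x t| ^ (p - 1) * x t + M * |y t| ^ (2 * p / (p + 1))) t)
    (hQ : ∀ t, 0 < x t ∧ 0 < y t) :
    Monotone (fun t => J (x t) (y t)) :=
  stmt_12_general p hp M hM K L hL hL0 J hJ x y hx hy hQ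
end
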